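/- arXiv:1110.6530 — 2 statements merged into one kernel-verified Lean document; each statement's English description precedes it below -/
import Mathlib

section
/- Let P be a continuous probability kernel on the finite alphabet A with inf_{a∈A, x∈A^{-ℕ}} P(a|x) ≥ δ > 0, and let X and Z be stationary chains compatible with P, with laws μ and ρ respectively. Define the cross conditional entropies H_X(Z_0 | Z_{−n}^{−1}) := − Σ_{a ∈ A^{n+1}} μ[a] log ρ(a_0 | a_{−n}^{−1}), where ρ(a_0 | a_{−n}^{−1}) = ρ[a_{−n}^{0}] / ρ[a_{−n}^{−1}]. Then lim_{n→∞} H_X(Z_0 | Z_{−n}^{−1}) exists and equals − E_μ[ log P(X_0 | X_{−1} X_{−2} …) ]; in particular the limit does not depend on the choice of the compatible chain Z. -/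
/-!
Shift invariance turns `μ[a_{-n}^0]` into the `μ`-mass of the event `(X_{-n}, …, X_0) = a`, so
`H_X(Z_0 | Z_{-n}^{-1})` is the `μ`-expectation of `-log ρ(X_0 | X_{-n}^{-1})`. By compatibility,
`ρ(a_0 | a_{-n}^{-1})` is a `ρ`-average of `P(a_0 | x)` over pasts `x` extending `a_{-n}^{-1}`,
so it lies within `var_n` of `P(X_0 | X_{-1} X_{-2} ⋯)`. Both are at least `δ`, where `log` is
`1/δ`-Lipschitz, so the two expectations differ by at most `var_n / δ → 0`.

The measurable structure on `A` is arbitrary, but strong non-nullness forces it to be discrete: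
if no measurable set separated `a` from `b`, the outer masses of the fibres `{ω_0 = c}`, which
are all `≥ δ`, could not add up to `1`.
-/

open MeasureTheory ProbabilityTheory Filter ENNReal

namespace GT

/-- The set of pasts: `x i` represents the symbol `x_{-(i+1)}`. -/
abbrev Past (A : Type*) := ℕ → A

variable {A : Type*} [Fintype A] [MeasurableSpace A]

/-- The past of a bi-infinite trajectory: `past ω i = ω (-(i+1))`. -/
def past (ω : ℤ → A) : Past A := fun i => ω (-((i : ℤ) + 1))

/-- The left shift on bi-infinite sequences. -/
def shift (ω : ℤ → A) : ℤ → A := fun n => ω (n + 1)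

/-- Shift invariance (stationarity) of a measure on `A^ℤ`. -/
def ShiftInvariant (μ : Measure (ℤ → A)) : Prop := μ.map shift = μ

/-- `P` is a (measurable) probability kernel on the alphabet `A`. -/
def IsProbKernel (P : A → Past A → ℝ) : Prop :=
  (∀ a, Measurable (P a)) ∧ (∀ a x, 0 ≤ P a x) ∧ ∀ x, ∑ a, P a x = 1

/-- `μ` is compatible with the kernel `P`: `P` is a regular version of the
conditional probabilities of `μ` given the past. -/
def Compatible (P : A → Past A → ℝ) (μ : Measure (ℤ → A)) : Prop :=
  ∀ (a : A) (B : Set (Past A)), MeasurableSet B →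
    (μ {ω | ω 0 = a ∧ past ω ∈ B}).toReal = ∫ ω in past ⁻¹' B, P a (past ω) ∂μ

/-- A stationary chain compatible with `P`. -/
def StatChain (P : A → Past A → ℝ) (μ : Measure (ℤ → A)) : Prop :=
  IsProbabilityMeasure μ ∧ ShiftInvariant μ ∧ Compatible P μ

/-- The continuity rate (variation) of order `k` of the kernel `P`. -/
noncomputable def varRate (P : A → Past A → ℝ) (k : ℕ) : ℝ :=
  sSup {d | ∃ (b : A) (x y : Past A), (∀ i < k, x i = y i) ∧ d = |P b x - P b y|}

/-- A kernel is continuous if its continuity rate tends to `0`. -/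
def ContinuousKernel (P : A → Past A → ℝ) : Prop :=
  Tendsto (varRate P) atTop (nhds 0)

/-- Strong non-nullness of a kernel. -/
def StronglyNonNull (P : A → Past A → ℝ) : Prop := ∃ δ > 0, ∀ a x, δ ≤ P a x

/-- A regular kernel: continuous and strongly non-null. -/
def RegularKernel (P : A → Past A → ℝ) : Prop := ContinuousKernel P ∧ StronglyNonNull P

/-- Attractiveness: for every `a`, `x ↦ ∑_{b ≥ a} P(b|x)` is nondecreasing for the
coordinatewise partial order on pasts. -/
def Attractive [LinearOrder A] (P : A → Past A → ℝ) : Prop :=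
  ∀ a : A, Monotone fun x : Past A => ∑ b ∈ Finset.univ.filter (fun b => a ≤ b), P b x

/-- The word `(X_1, …, X_n)` read off from a trajectory `ω`. -/
def word (n : ℕ) (ω : ℤ → A) : Fin n → A := fun j => ω (((j : ℕ) : ℤ) + 1)

/-- `δ_j f`: the oscillation of `f` along the `j`-th coordinate. -/
noncomputable def deltaj {n : ℕ} (f : (Fin n → A) → ℝ) (j : Fin n) : ℝ :=
  sSup {d | ∃ a b : Fin n → A, (∀ i, i ≠ j → a i = b i) ∧ d = |f a - f b|}

/-- `‖δf‖_{ℓ1}`. -/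
noncomputable def delta1 {n : ℕ} (f : (Fin n → A) → ℝ) : ℝ := ∑ j, deltaj f j

/-- `‖δf‖_{ℓ2}²`. -/
noncomputable def delta2sq {n : ℕ} (f : (Fin n → A) → ℝ) : ℝ := ∑ j, (deltaj f j) ^ 2

/-- Concentration of measure at exponential rate for the stationary law `μ`. -/
def ConcExpRate (μ : Measure (ℤ → A)) : Prop :=
  ∃ (C : ℝ) (g : ℝ → ℝ → ℝ), (∀ ε t, 0 < ε → 0 < t → 0 < g ε t) ∧
    ∀ (n : ℕ), 1 ≤ n → ∀ (f : (Fin n → A) → ℝ) (ε : ℝ), 0 < ε →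
      (μ {ω | ε < |f (word n ω) - ∫ ω', f (word n ω') ∂μ|}).toReal ≤
        C * Real.exp (-(g ε (delta1 f)) / delta2sq f)

/-- `ℙ` is the law of an i.i.d. process indexed by `ℤ`. -/
def IsIID {U : Type*} [MeasurableSpace U] (P : Measure (ℤ → U)) : Prop :=
  IsProbabilityMeasure P ∧
  iIndepFun (fun i (u : ℤ → U) => u i) P ∧
  ∀ i : ℤ, P.map (fun u => u i) = P.map (fun u => u 0)

/-- A finitary coding of the process with law `ℙ` onto the process with law `μ`:
a shift-equivariant measurable factor map together with a.s. finite stopping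
times `θ₁` (into the past) and `θ₂` (into the future) such that the zeroth output
symbol only depends on the coordinates in the window `[-θ₁, θ₂]`. -/
structure FinitaryCoding {U : Type*} [MeasurableSpace U]
    (μ : Measure (ℤ → A)) (P : Measure (ℤ → U)) where
  Φ : (ℤ → U) → ℤ → A
  meas : Measurable Φ
  equivariant : ∀ (u : ℤ → U) (n : ℤ), Φ (fun m => u (m + 1)) n = Φ u (n + 1)
  map_eq : P.map Φ = μ
  θ₁ : (ℤ → U) → ℕ∞
  θ₂ : (ℤ → U) → ℕ∞
  meas_theta : ∀ k l : ℕ∞, MeasurableSet {u | θ₁ u = k ∧ θ₂ u = l}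
  finite_ae : P {u | θ₁ u = ⊤ ∨ θ₂ u = ⊤} = 0
  window : ∀ (k l : ℕ) (u v : ℤ → U),
      (∀ j : ℤ, -(k : ℤ) ≤ j → j ≤ (l : ℤ) → u j = v j) →
      θ₁ u = (k : ℕ∞) → θ₂ u = (l : ℕ∞) → θ₁ v = (k : ℕ∞) ∧ θ₂ v = (l : ℕ∞)
  localize : ∀ u v : ℤ → U,
      (∀ j : ℤ, ((j.natAbs : ℕ∞) ≤ if j < 0 then θ₁ u else θ₂ u) → u j = v j) →
      Φ u 0 = Φ v 0

/-- The new past obtained by appending the freshly generated symbol `a`. -/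
def consPast (a : A) (x : Past A) : Past A := fun i =>
  match i with
  | 0 => a
  | j + 1 => x j

/-- The probability that the fixed-past chain with past `x` produces the word `w`
(first element of `w` generated first). -/
noncomputable def wordProb (P : A → Past A → ℝ) : Past A → List A → ℝ
  | _, [] => 1
  | x, a :: w => P a x * wordProb P (consPast a x) w

/-- `ℙ(X_{j+1}^x … X_{j+|w|}^x = w)`: the law of the fixed-past chain shifted by `j`. -/
noncomputable def shiftedCylProb (P : A → Past A → ℝ) (x : Past A) (j : ℕ) (w : List A) : ℝ :=
  ∑ u : Fin j → A, wordProb P x (List.ofFn u ++ w)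

/-- The cylinder set `{ω : ω_1 … ω_n = w}` (coordinates `1, …, |w|`). -/
def cylFrom1 (w : List A) : Set (ℤ → A) :=
  {ω | ∀ i : Fin w.length, ω (((i : ℕ) : ℤ) + 1) = w.get i}


variable {A : Type*} [Fintype A] [MeasurableSpace A]

/-- The cylinder set `{ω : ω_0 … ω_{n-1} = w}`. -/
def cyl (n : ℕ) (w : Fin n → A) : Set (ℤ → A) := {ω | ∀ i : Fin n, ω ((i : ℕ) : ℤ) = w i}

/-- The cross conditional entropy `H_X(Z_0 | Z_{-n}^{-1})`, where `X` has law `μ`,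
`Z` has law `ρ`, and a word `w : Fin (n+1) → A` represents `(a_{-n}, …, a_0)` (the
last coordinate of `w` is `a_0`); `ρ(a_0 | a_{-n}^{-1}) = ρ[a_{-n}^0] / ρ[a_{-n}^{-1}]`. -/
noncomputable def crossEntropy (μ ρ : Measure (ℤ → A)) (n : ℕ) : ℝ :=
  -∑ w : Fin (n + 1) → A,
    (μ (cyl (n + 1) w)).toReal *
      Real.log ((ρ (cyl (n + 1) w)).toReal / (ρ (cyl n (Fin.init w))).toReal)

theorem preimage_eq_self_of_preimage_eval_eq {ι : Type*} {β : ι → Type*}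
    [∀ i, MeasurableSpace (β i)] {φ : (∀ i, β i) → ∀ i, β i}
    (hφ : ∀ i (M : Set (β i)), MeasurableSet M →
      φ ⁻¹' (Function.eval i ⁻¹' M) = Function.eval i ⁻¹' M)
    {H : Set (∀ i, β i)} (hH : MeasurableSet H) : φ ⁻¹' H = H := by
  let invariant : MeasurableSpace (∀ i, β i) :=
    { MeasurableSet' := fun H => MeasurableSet H ∧ φ ⁻¹' H = H
      measurableSet_empty := ⟨.empty, rfl⟩
      measurableSet_compl := fun H h => ⟨h.1.compl, by rw [Set.preimage_compl, h.2]⟩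
      measurableSet_iUnion := fun f hf => ⟨.iUnion fun i => (hf i).1, by
        rw [Set.preimage_iUnion]; exact Set.iUnion_congr fun i => (hf i).2⟩ }
  have hle : MeasurableSpace.pi ≤ invariant := by
    refine iSup_le fun i => ?_
    rintro _ ⟨M, hM, rfl⟩
    exact ⟨measurable_pi_apply i hM, hφ i M hM⟩
  exact (hle H hH).2

section Alphabet

variable {ι A : Type*} [MeasurableSpace A]

/-- Swapping `a` and `b` in the `i`-th coordinate fixes every measurable set, so the measurable
hull of the fibre over `a` also contains the fibre over `b`. -/
theorem measure_eval_eq_zero_of_inseparable [DecidableEq ι] [Fintype A] (i : ι)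
    {μ : Measure (ι → A)} [IsFiniteMeasure μ]
    (hsum : ∑ c, μ {ω | ω i = c} ≤ μ Set.univ) {a b : A} (hab : a ≠ b)
    (hinsep : ∀ s, MeasurableSet s → (a ∈ s ↔ b ∈ s)) :
    μ {ω | ω i = b} = 0 := by
  classical
  let fibre : A → Set (ι → A) := fun c => {ω | ω i = c}
  let hull : A → Set (ι → A) := fun c => toMeasurable μ (fibre c)
  let swapAt : (ι → A) → ι → A := fun ω => Function.update ω i (Equiv.swap a b (ω i))
  have hswap : ∀ M : Set A, MeasurableSet M → Equiv.swap a b ⁻¹' M = M := by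
    intro M hM
    ext c
    rcases eq_or_ne c a with rfl | hca
    · simpa using (hinsep M hM).symm
    rcases eq_or_ne c b with rfl | hcb
    · simpa using hinsep M hM
    · simp [Equiv.swap_apply_of_ne_of_ne hca hcb]
  have hinv : swapAt ⁻¹' hull a = hull a := by
    refine preimage_eq_self_of_preimage_eval_eq (fun j M hM => ?_)
      (measurableSet_toMeasurable _ _)
    rcases eq_or_ne j i with rfl | hji
    · ext ω
      simpa [swapAt] using Set.ext_iff.1 (hswap M hM) (ω j)
    · ext ω
      simp [swapAt, Function.update_of_ne hji]
  have hb_sub : fibre b ⊆ hull a := by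
    intro ω (hω : ω i = b)
    rw [← hinv]
    exact subset_toMeasurable μ (fibre a) (by simp [swapAt, fibre, hω])
  let others : Finset A := (Finset.univ.erase a).erase b
  have hcover : Set.univ ⊆ hull a ∪ ⋃ c ∈ others, hull c := by
    intro ω _
    by_cases ha : ω i = a
    · exact Or.inl (subset_toMeasurable μ (fibre a) ha)
    by_cases hb : ω i = b
    · exact Or.inl (hb_sub hb)
    exact Or.inr (Set.mem_biUnion (by simp [others, ha, hb])
      (subset_toMeasurable μ (fibre (ω i)) rfl))
  have hmass : μ (fibre a) + ∑ c ∈ others, μ (fibre c) + μ (fibre b)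
      ≤ μ (fibre a) + ∑ c ∈ others, μ (fibre c) + 0 := calc
    _ = ∑ c, μ (fibre c) := by
      rw [← Finset.add_sum_erase _ _ (Finset.mem_univ a),
        ← Finset.add_sum_erase _ _ (Finset.mem_erase.2 ⟨hab.symm, Finset.mem_univ b⟩)]
      ring
    _ ≤ μ Set.univ := hsum
    _ ≤ μ (hull a) + ∑ c ∈ others, μ (hull c) :=
      (measure_mono hcover).trans ((measure_union_le _ _).trans
        (by gcongr; exact measure_biUnion_finset_le _ _))
    _ = _ := by simp [hull, measure_toMeasurable]
  have hfinite : μ (fibre a) + ∑ c ∈ others, μ (fibre c) ≠ ∞ :=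
    ENNReal.add_ne_top.2 ⟨measure_ne_top _ _, ENNReal.sum_ne_top.2 fun _ _ => measure_ne_top _ _⟩
  exact nonpos_iff_eq_zero.1 ((ENNReal.add_le_add_iff_left hfinite).1 hmass)

theorem separatesPoints_of_measure_eval_ne_zero [DecidableEq ι] [Fintype A] (i : ι)
    {μ : Measure (ι → A)} [IsFiniteMeasure μ]
    (hsum : ∑ c, μ {ω | ω i = c} ≤ μ Set.univ) (hpos : ∀ c, μ {ω | ω i = c} ≠ 0) :
    MeasurableSpace.SeparatesPoints A :=
  MeasurableSpace.separatesPoints_iff.2 fun _ b hinsep => by_contra fun hab =>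
    hpos b (measure_eval_eq_zero_of_inseparable i hsum hab hinsep)

end Alphabet

section Window

variable {A : Type*}

/-- `pastWindow n x = (x_{-n}, …, x_{-1})`, oldest symbol first. -/
def pastWindow (n : ℕ) (x : Past A) : Fin n → A := fun i => x i.rev

/-- `window n ω = (ω_{-n}, …, ω_0)`, indexed like the words of `crossEntropy`. -/
def window (n : ℕ) (ω : ℤ → A) : Fin (n + 1) → A := fun i => ω ((i : ℤ) - n)

def pastCyl (n : ℕ) (v : Fin n → A) : Set (ℤ → A) := past ⁻¹' (pastWindow n ⁻¹' {v})

theorem window_castSucc (n : ℕ) (ω : ℤ → A) (i : Fin n) :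
    window n ω i.castSucc = pastWindow n (past ω) i := by
  simp only [window, pastWindow, past, Fin.val_castSucc, Fin.val_rev]
  congr 1
  omega

theorem window_last (n : ℕ) (ω : ℤ → A) : window n ω (Fin.last n) = ω 0 := by
  simp [window]

theorem window_eq_iff {n : ℕ} {ω : ℤ → A} {w : Fin (n + 1) → A} :
    window n ω = w ↔ ω 0 = w (Fin.last n) ∧ pastWindow n (past ω) = Fin.init w := by
  simp only [funext_iff, Fin.forall_fin_succ' (P := fun i => window n ω i = w i),
    window_castSucc, window_last, Fin.init, and_comm]

theorem eq_of_pastWindow_eq {n : ℕ} {x y : Past A}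
    (h : pastWindow n x = pastWindow n y) : ∀ i < n, x i = y i := fun i hi => by
  simpa [pastWindow] using congrFun h (Fin.rev ⟨i, hi⟩)

theorem iterate_shift_apply (n : ℕ) (ω : ℤ → A) (i : ℤ) : shift^[n] ω i = ω (i + n) := by
  induction n generalizing ω with
  | zero => simp
  | succ n ih =>
    rw [Function.iterate_succ_apply, ih]
    simp only [shift, Nat.cast_succ]
    ring_nf

theorem cyl_eq_preimage_iterate_shift (n : ℕ) (v : Fin n → A) :
    cyl n v = shift^[n] ⁻¹' pastCyl n v := by
  ext ω
  simp only [cyl, pastCyl, Set.mem_preimage, Set.mem_singleton_iff, funext_iff,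
    pastWindow, past, iterate_shift_apply, Fin.val_rev]
  refine forall_congr' fun i => Eq.congr_left (congrArg ω ?_)
  omega

theorem cyl_succ_eq_preimage_iterate_shift (n : ℕ) (w : Fin (n + 1) → A) :
    cyl (n + 1) w = shift^[n] ⁻¹' (window n ⁻¹' {w}) := by
  ext ω
  simp [cyl, funext_iff, window, iterate_shift_apply]

end Window

section Measurability

variable {A : Type*} [MeasurableSpace A]

theorem measurable_shift : Measurable (shift : (ℤ → A) → ℤ → A) :=
  measurable_pi_lambda _ fun _ => measurable_pi_apply _

theorem measurable_past : Measurable (past : (ℤ → A) → Past A) :=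
  measurable_pi_lambda _ fun _ => measurable_pi_apply _

theorem measurable_pastWindow (n : ℕ) : Measurable (pastWindow n : Past A → Fin n → A) :=
  measurable_pi_lambda _ fun _ => measurable_pi_apply _

theorem measurable_window (n : ℕ) : Measurable (window n : (ℤ → A) → Fin (n + 1) → A) :=
  measurable_pi_lambda _ fun _ => measurable_pi_apply _

theorem measurableSet_pastCyl [MeasurableSingletonClass A] (n : ℕ) (v : Fin n → A) :
    MeasurableSet (pastCyl n v) :=
  measurable_past (measurable_pastWindow n (measurableSet_singleton v))

theorem ShiftInvariant.measurePreserving_iterate {μ : Measure (ℤ → A)} (h : ShiftInvariant μ)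
    (n : ℕ) : MeasurePreserving shift^[n] μ μ :=
  (MeasurePreserving.mk measurable_shift h).iterate n

theorem ShiftInvariant.measureReal_cyl [MeasurableSingletonClass A] {μ : Measure (ℤ → A)}
    (h : ShiftInvariant μ) (n : ℕ) (v : Fin n → A) :
    μ.real (cyl n v) = μ.real (pastCyl n v) := by
  rw [cyl_eq_preimage_iterate_shift]
  exact (h.measurePreserving_iterate n).measureReal_preimage
    (measurableSet_pastCyl n v).nullMeasurableSet

theorem ShiftInvariant.measureReal_cyl_succ [MeasurableSingletonClass A] {μ : Measure (ℤ → A)}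
    (h : ShiftInvariant μ) (n : ℕ) (w : Fin (n + 1) → A) :
    μ.real (cyl (n + 1) w) = μ.real (window n ⁻¹' {w}) := by
  rw [cyl_succ_eq_preimage_iterate_shift]
  exact (h.measurePreserving_iterate n).measureReal_preimage
    (measurable_window n (measurableSet_singleton w)).nullMeasurableSet

theorem Compatible.measureReal_window [MeasurableSingletonClass A] {P : A → Past A → ℝ}
    {μ : Measure (ℤ → A)} (h : Compatible P μ) (n : ℕ) (w : Fin (n + 1) → A) :
    μ.real (window n ⁻¹' {w}) =
      ∫ ω in pastCyl n (Fin.init w), P (w (Fin.last n)) (past ω) ∂μ := by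
  have hset : window n ⁻¹' {w}
      = {ω | ω 0 = w (Fin.last n) ∧ past ω ∈ pastWindow n ⁻¹' {Fin.init w}} :=
    Set.ext fun _ => window_eq_iff
  rw [hset]
  exact h _ _ (measurable_pastWindow n (measurableSet_singleton _))

end Measurability

theorem abs_log_sub_log_le_div {δ u v : ℝ} (hδ : 0 < δ) (hu : δ ≤ u) (hv : δ ≤ v) :
    |Real.log u - Real.log v| ≤ |u - v| / δ := by
  have key : ∀ {u v : ℝ}, δ ≤ u → δ ≤ v → Real.log u - Real.log v ≤ |u - v| / δ := by
    intro u v hu hv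
    have hu0 : 0 < u := hδ.trans_le hu
    have hv0 : 0 < v := hδ.trans_le hv
    rw [← Real.log_div hu0.ne' hv0.ne']
    calc Real.log (u / v) ≤ u / v - 1 := Real.log_le_sub_one_of_pos (div_pos hu0 hv0)
      _ = (u - v) / v := by field_simp
      _ ≤ |u - v| / v := by gcongr; exact le_abs_self _
      _ ≤ |u - v| / δ := by gcongr
  rw [abs_sub_le_iff]
  exact ⟨key hu hv, abs_sub_comm u v ▸ key hv hu⟩

theorem abs_setIntegral_sub_le {α : Type*} [MeasurableSpace α] {μ : Measure α}
    [IsFiniteMeasure μ] {s : Set α} {f : α → ℝ} {c ε : ℝ} (hf : IntegrableOn f s μ)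
    (h : ∀ x ∈ s, |f x - c| ≤ ε) : |∫ x in s, f x ∂μ - μ.real s * c| ≤ ε * μ.real s := by
  rw [← smul_eq_mul, ← setIntegral_const,
    ← integral_sub hf (integrableOn_const (by finiteness)), ← Real.norm_eq_abs]
  exact norm_setIntegral_le_of_norm_le_const (measure_lt_top μ s) h

section Kernel

variable {A : Type*} [Fintype A] [MeasurableSpace A] {P : A → Past A → ℝ}

theorem IsProbKernel.le_one (hP : IsProbKernel P) (a : A) (x : Past A) : P a x ≤ 1 :=
  (Finset.single_le_sum (fun b _ => hP.2.1 b x) (Finset.mem_univ a)).trans_eq (hP.2.2 x)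

theorem IsProbKernel.abs_sub_le_varRate (hP : IsProbKernel P) {k : ℕ} (b : A) {x y : Past A}
    (hxy : ∀ i < k, x i = y i) : |P b x - P b y| ≤ varRate P k := by
  refine le_csSup ⟨1, ?_⟩ ⟨b, x, y, hxy, rfl⟩
  rintro _ ⟨c, u, v, -, rfl⟩
  rw [abs_sub_le_iff]
  constructor <;> linarith [hP.le_one c u, hP.le_one c v, hP.2.1 c u, hP.2.1 c v]

theorem IsProbKernel.integrable_comp_past (hP : IsProbKernel P) (μ : Measure (ℤ → A))
    [IsFiniteMeasure μ] (a : A) : Integrable (fun ω => P a (past ω)) μ :=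
  .of_bound ((hP.1 a).comp measurable_past).aestronglyMeasurable 1 <| ae_of_all _ fun ω => by
    rw [Real.norm_eq_abs, abs_of_nonneg (hP.2.1 a _)]
    exact hP.le_one a _

theorem IsProbKernel.integrable_log [MeasurableSingletonClass A] (hP : IsProbKernel P)
    {δ : ℝ} (hδ : 0 < δ) (hbound : ∀ a x, δ ≤ P a x) (μ : Measure (ℤ → A)) [IsFiniteMeasure μ] :
    Integrable (fun ω => Real.log (P (ω 0) (past ω))) μ := by
  have hmeas : Measurable fun ω : ℤ → A => P (ω 0) (past ω) :=
    (measurable_from_prod_countable_right (f := fun p : A × Past A => P p.1 p.2) hP.1).comp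
      ((measurable_pi_apply 0).prodMk measurable_past)
  refine .of_bound (Real.measurable_log.comp hmeas).aestronglyMeasurable (-Real.log δ) <|
    ae_of_all _ fun ω => ?_
  have hlog_le : Real.log δ ≤ Real.log (P (ω 0) (past ω)) := Real.log_le_log hδ (hbound _ _)
  have hlog_nonpos : Real.log (P (ω 0) (past ω)) ≤ 0 :=
    Real.log_nonpos (hδ.le.trans (hbound _ _)) (hP.le_one _ _)
  rw [Real.norm_eq_abs, abs_le]
  constructor <;> linarith

end Kernel

/-- `log ρ(a_0 | a_{-n}^{-1})` for `w = (a_{-n}, …, a_0)`. -/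
noncomputable def logCondProb {A : Type*} [MeasurableSpace A] (ρ : Measure (ℤ → A)) (n : ℕ)
    (w : Fin (n + 1) → A) : ℝ :=
  Real.log (ρ.real (cyl (n + 1) w) / ρ.real (cyl n (Fin.init w)))

namespace StatChain

variable {A : Type*} [MeasurableSpace A] {P : A → Past A → ℝ} {μ : Measure (ℤ → A)} {δ : ℝ}

theorem measurableSingletonClass [Fintype A] (hP : IsProbKernel P) (hδ : 0 < δ)
    (hbound : ∀ a x, δ ≤ P a x) (hμ : StatChain P μ) : MeasurableSingletonClass A := by
  have := hμ.1
  have hfibre : ∀ a, μ.real {ω | ω 0 = a} = ∫ ω, P a (past ω) ∂μ := fun a => by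
    simpa [measureReal_def] using hμ.2.2 a Set.univ .univ
  have hsum : ∑ c, μ {ω | ω 0 = c} = 1 := by
    refine (ENNReal.toReal_eq_one_iff _).1 ?_
    rw [ENNReal.toReal_sum fun _ _ => measure_ne_top _ _]
    simp_rw [← measureReal_def, hfibre]
    rw [← integral_finsetSum _ fun a _ => hP.integrable_comp_past μ a]
    simp [hP.2.2]
  have hpos : ∀ c, μ {ω | ω 0 = c} ≠ 0 := fun c h => by
    have hδle : δ ≤ μ.real {ω | ω 0 = c} := by
      simpa [hfibre] using
        integral_mono (integrable_const δ) (hP.integrable_comp_past μ c) fun _ => hbound _ _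
    simp only [measureReal_def, h, ENNReal.toReal_zero] at hδle
    linarith
  have := separatesPoints_of_measure_eval_ne_zero 0 (hsum.trans measure_univ.symm).le hpos
  infer_instance

variable [MeasurableSingletonClass A]

theorem measureReal_cyl_succ (hμ : StatChain P μ) (n : ℕ) (w : Fin (n + 1) → A) :
    μ.real (cyl (n + 1) w) =
      ∫ ω in pastCyl n (Fin.init w), P (w (Fin.last n)) (past ω) ∂μ := by
  rw [hμ.2.1.measureReal_cyl_succ, hμ.2.2.measureReal_window]

variable [Fintype A]

theorem mul_measureReal_cyl_init_le (hP : IsProbKernel P) (hbound : ∀ a x, δ ≤ P a x)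
    (hμ : StatChain P μ) (n : ℕ) (w : Fin (n + 1) → A) :
    δ * μ.real (cyl n (Fin.init w)) ≤ μ.real (cyl (n + 1) w) := by
  have := hμ.1
  rw [hμ.measureReal_cyl_succ, hμ.2.1.measureReal_cyl]
  exact setIntegral_ge_of_const_le_real (measurableSet_pastCyl n _) (measure_ne_top _ _)
    (fun _ _ => hbound _ _) (hP.integrable_comp_past μ _).integrableOn

theorem pow_le_measureReal_cyl (hP : IsProbKernel P) (hδ : 0 ≤ δ) (hbound : ∀ a x, δ ≤ P a x)
    (hμ : StatChain P μ) (n : ℕ) (v : Fin n → A) : δ ^ n ≤ μ.real (cyl n v) := by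
  have := hμ.1
  induction n with
  | zero => simp [cyl]
  | succ n ih =>
    calc δ ^ (n + 1) = δ * δ ^ n := pow_succ' δ n
      _ ≤ δ * μ.real (cyl n (Fin.init v)) := by gcongr; exact ih _
      _ ≤ μ.real (cyl (n + 1) v) := hμ.mul_measureReal_cyl_init_le hP hbound n v

theorem measureReal_cyl_pos (hP : IsProbKernel P) (hδ : 0 < δ) (hbound : ∀ a x, δ ≤ P a x)
    (hμ : StatChain P μ) (n : ℕ) (v : Fin n → A) : 0 < μ.real (cyl n v) :=
  (pow_pos hδ n).trans_le (hμ.pow_le_measureReal_cyl hP hδ.le hbound n v)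

theorem abs_condProb_sub_le (hP : IsProbKernel P) (hδ : 0 < δ) (hbound : ∀ a x, δ ≤ P a x)
    (hμ : StatChain P μ) (n : ℕ) (w : Fin (n + 1) → A) {x : Past A}
    (hx : pastWindow n x = Fin.init w) :
    |μ.real (cyl (n + 1) w) / μ.real (cyl n (Fin.init w)) - P (w (Fin.last n)) x|
      ≤ varRate P n := by
  have := hμ.1
  have hq := hμ.measureReal_cyl_pos hP hδ hbound n (Fin.init w)
  have hint := abs_setIntegral_sub_le (hP.integrable_comp_past μ _).integrableOn
    (s := pastCyl n (Fin.init w)) (c := P (w (Fin.last n)) x) (ε := varRate P n)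
    fun ω (hω : pastWindow n (past ω) = Fin.init w) =>
      hP.abs_sub_le_varRate _ (eq_of_pastWindow_eq (hω.trans hx.symm))
  rw [← hμ.measureReal_cyl_succ, ← hμ.2.1.measureReal_cyl] at hint
  rw [div_sub' hq.ne', abs_div, abs_of_pos hq, div_le_iff₀ hq]
  exact hint

theorem abs_log_sub_logCondProb_le (hP : IsProbKernel P) (hδ : 0 < δ)
    (hbound : ∀ a x, δ ≤ P a x) (hμ : StatChain P μ) (n : ℕ) (ω : ℤ → A) :
    |Real.log (P (ω 0) (past ω)) - logCondProb μ n (window n ω)| ≤ varRate P n / δ := by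
  obtain ⟨hlast, hpast⟩ := window_eq_iff.1 (rfl : window n ω = window n ω)
  have hratio :
      δ ≤ μ.real (cyl (n + 1) (window n ω)) / μ.real (cyl n (Fin.init (window n ω))) :=
    (le_div_iff₀ (hμ.measureReal_cyl_pos hP hδ hbound n _)).2
      (hμ.mul_measureReal_cyl_init_le hP hbound n _)
  rw [logCondProb, abs_sub_comm]
  refine (abs_log_sub_log_le_div hδ hratio (hbound _ _)).trans ?_
  gcongr
  rw [hlast]
  exact hμ.abs_condProb_sub_le hP hδ hbound n _ hpast

end StatChain

theorem crossEntropy_eq_neg_integral {A : Type*} [Fintype A] [MeasurableSpace A]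
    [MeasurableSingletonClass A] {μ : Measure (ℤ → A)} [IsFiniteMeasure μ]
    (hμ : ShiftInvariant μ) (ρ : Measure (ℤ → A)) (n : ℕ) :
    crossEntropy μ ρ n = -∫ ω, logCondProb ρ n (window n ω) ∂μ := by
  rw [← integral_map (measurable_window n).aemeasurable .of_discrete,
    integral_fintype .of_finite, crossEntropy]
  simp only [map_measureReal_apply (measurable_window n) (measurableSet_singleton _),
    ← measureReal_def, ← hμ.measureReal_cyl_succ, smul_eq_mul, logCondProb]

theorem StatChain.abs_crossEntropy_sub_le {A : Type*} [Fintype A] [MeasurableSpace A]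
    [MeasurableSingletonClass A] {P : A → Past A → ℝ} (hP : IsProbKernel P) {δ : ℝ}
    (hδ : 0 < δ) (hbound : ∀ a x, δ ≤ P a x) {μ ρ : Measure (ℤ → A)} (hμ : StatChain P μ)
    (hρ : StatChain P ρ) (n : ℕ) :
    |crossEntropy μ ρ n - -∫ ω, Real.log (P (ω 0) (past ω)) ∂μ| ≤ varRate P n / δ := by
  have := hμ.1
  have hcond : Integrable (fun ω => logCondProb ρ n (window n ω)) μ :=
    Integrable.comp_measurable (g := logCondProb ρ n) .of_finite (measurable_window n)
  rw [crossEntropy_eq_neg_integral hμ.2.1, neg_sub_neg,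
    ← integral_sub (hP.integrable_log hδ hbound μ) hcond, ← Real.norm_eq_abs]
  simpa using norm_integral_le_of_norm_le_const (μ := μ) <| ae_of_all _ fun ω =>
    (Real.norm_eq_abs _).trans_le (hρ.abs_log_sub_logCondProb_le hP hδ hbound n ω)

/-- Step of the proof of **Lemma 4** (Gallo–Takahashi): for a continuous, strongly
non-null kernel `P` and stationary compatible chains `X` (law `μ`) and `Z` (law `ρ`),
the cross conditional entropies `H_X(Z_0 | Z_{-n}^{-1})` converge to
`-E_μ[log P(X_0 | X_{-1} X_{-2} ⋯)]`; in particular the limit does not depend on `Z`. -/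
theorem statement10 (P : A → Past A → ℝ) (hker : IsProbKernel P)
    (hcont : ContinuousKernel P) (δ : ℝ) (hδ : 0 < δ) (hbound : ∀ a x, δ ≤ P a x)
    (μ ρ : Measure (ℤ → A)) (hμ : StatChain P μ) (hρ : StatChain P ρ) :
    Tendsto (fun n => crossEntropy μ ρ n) atTop
      (nhds (-∫ ω, Real.log (P (ω 0) (past ω)) ∂μ)) := by
  have := hμ.measurableSingletonClass hker hδ hbound
  refine tendsto_iff_dist_tendsto_zero.2 <| squeeze_zero (fun _ => dist_nonneg)
    (fun n => (hμ.abs_crossEntropy_sub_le hker hδ hbound hρ n).trans_eq' (Real.dist_eq _ _)) ?_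
  simpa using hcont.div_const δ

end GT
end

section
/- Let A = {−1,+1}, let ψ : ℝ → (0,1) be continuously differentiable and increasing with ψ(t) + ψ(−t) = 1, let {ξ_n}_{n≥1} be a summable sequence of nonnegative reals and γ ≥ 0, and define the binary auto-regressive kernel P(a|x) := ψ( a Σ_{n≥1} ξ_n x_{−n} + aγ ). Then P is an attractive regular probability kernel; moreover, if ψ is Lipschitz continuous, there exists a constant C > 0 such that var_k ≤ C Σ_{n>k} ξ_n and osc_n ≤ C ξ_n for all k, n ≥ 1. -/
open MeasureTheory ProbabilityTheory Filter ENNReal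

namespace GT

variable {A : Type*} [Fintype A] [MeasurableSpace A]

/-- The oscillation of the kernel at the past coordinate `n` (representing the
paper's `osc_{n+1}`, i.e. the coordinate `x_{-(n+1)}`). -/
noncomputable def oscRate {A : Type*} [Fintype A] (P : A → Past A → ℝ) (n : ℕ) : ℝ :=
  ∑ a : A, sSup {d | ∃ x y : Past A, (∀ i, i ≠ n → x i = y i) ∧ d = |P a x - P a y|}

/-- The alphabet `{-1,+1}` is represented by `Bool`: `true ↦ +1`, `false ↦ -1`
(with the order `false < true` matching `-1 < +1`). -/
def pmVal (b : Bool) : ℝ := if b then 1 else -1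

/-- The binary auto-regressive kernel `P(a|x) = ψ(a ∑_{n≥1} ξ_n x_{-n} + aγ)`
(here `ξ i` represents the paper's `ξ_{i+1}` and `x i` the symbol `x_{-(i+1)}`). -/
noncomputable def arP (ψ : ℝ → ℝ) (ξ : ℕ → ℝ) (γ : ℝ) : Bool → Past Bool → ℝ :=
  fun a x => ψ (pmVal a * (∑' i : ℕ, ξ i * pmVal (x i)) + pmVal a * γ)

/-!
The field `S(x) = ∑ ξ_i x_{-i}` takes values in `[-M, M]` with `M = ∑ ξ_i + |γ|`, is
nondecreasing in the past, and changes by at most `2 ∑_{i ≥ k} ξ_i` when only coordinates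
`≥ k` change, and by at most `2 ξ_n` when only coordinate `n` changes. Since
`P(±1 | x) = ψ(±(S(x) + γ))`, everything follows from the properties of `ψ`: the symmetry
`ψ(t) + ψ(-t) = 1` makes `P` a kernel, monotonicity gives attractiveness and the lower bound
`ψ(-M) > 0`, and a Lipschitz constant of `ψ` on `[-M, M]` (which exists since `ψ` is `C¹`)
turns the bounds on `S` into the bounds on `var_k` and `osc_n`.
-/

section KernelRates

variable {A : Type*}

theorem varRate_nonneg (P : A → Past A → ℝ) (k : ℕ) : 0 ≤ varRate P k :=
  Real.sSup_nonneg <| by rintro d ⟨b, x, y, -, rfl⟩; exact abs_nonneg _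

theorem varRate_le {P : A → Past A → ℝ} {k : ℕ} {B : ℝ} (hB : 0 ≤ B)
    (h : ∀ b x y, (∀ i < k, x i = y i) → |P b x - P b y| ≤ B) : varRate P k ≤ B :=
  Real.sSup_le (by rintro d ⟨b, x, y, hxy, rfl⟩; exact h b x y hxy) hB

theorem oscRate_le [Fintype A] {P : A → Past A → ℝ} {n : ℕ} {B : ℝ} (hB : 0 ≤ B)
    (h : ∀ a x y, (∀ i, i ≠ n → x i = y i) → |P a x - P a y| ≤ B) :
    oscRate P n ≤ Fintype.card A * B := by
  calc oscRate P n ≤ ∑ _a : A, B := Finset.sum_le_sum fun a _ =>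
        Real.sSup_le (by rintro d ⟨x, y, hxy, rfl⟩; exact h a x y hxy) hB
    _ = Fintype.card A * B := by rw [Finset.sum_const, Finset.card_univ, nsmul_eq_mul]

theorem attractive_of_monotone_true {P : Bool → Past Bool → ℝ} (hP : ∀ x, ∑ a, P a x = 1)
    (hmono : Monotone (P true)) : Attractive P := by
  rintro (_ | _)
  · simpa only [Bool.false_le, Finset.filter_true, hP] using monotone_const
  · have hge : Finset.univ.filter (fun b : Bool => true ≤ b) = {true} := by decide
    simpa only [hge, Finset.sum_singleton] using hmono

end KernelRates

theorem abs_pmVal (b : Bool) : |pmVal b| = 1 := by cases b <;> simp [pmVal]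

theorem pmVal_mono : Monotone pmVal := by
  rintro (_ | _) (_ | _) hab <;> simp_all [pmVal, Bool.le_iff_imp]

theorem abs_pmVal_sub_le (a b : Bool) : |pmVal a - pmVal b| ≤ 2 := by
  cases a <;> cases b <;> norm_num [pmVal]

noncomputable def arS (ξ : ℕ → ℝ) (x : Past Bool) : ℝ := ∑' i, ξ i * pmVal (x i)

section Field

variable {ξ : ℕ → ℝ}

theorem summable_arS (hξ : Summable ξ) (x : Past Bool) :
    Summable fun i => ξ i * pmVal (x i) :=
  hξ.norm.of_norm_bounded fun i => by rw [norm_mul, Real.norm_eq_abs (pmVal _), abs_pmVal, mul_one]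

theorem measurable_arS (hξ : Summable ξ) : Measurable (arS ξ) := by
  have hpartial :
      ∀ n, Measurable fun x : Past Bool => ∑ i ∈ Finset.range n, ξ i * pmVal (x i) :=
    fun n => Finset.measurable_sum _ fun i _ =>
      ((measurable_of_countable pmVal).comp (measurable_pi_apply i)).const_mul (ξ i)
  exact measurable_of_tendsto_metrizable hpartial
    (tendsto_pi_nhds.2 fun x => (summable_arS hξ x).hasSum.tendsto_sum_nat)

theorem abs_arS_le (hξ : Summable ξ) (hξ0 : ∀ i, 0 ≤ ξ i) (x : Past Bool) :
    |arS ξ x| ≤ ∑' i, ξ i :=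
  calc |arS ξ x| ≤ ∑' i, ‖ξ i * pmVal (x i)‖ :=
        norm_tsum_le_tsum_norm (summable_arS hξ x).norm
    _ = ∑' i, ξ i := tsum_congr fun i => by
        rw [Real.norm_eq_abs, abs_mul, abs_pmVal, mul_one, abs_of_nonneg (hξ0 i)]

theorem arS_mono (hξ : Summable ξ) (hξ0 : ∀ i, 0 ≤ ξ i) : Monotone (arS ξ) :=
  fun x y hxy => Summable.tsum_le_tsum
    (fun i => mul_le_mul_of_nonneg_left (pmVal_mono (hxy i)) (hξ0 i))
    (summable_arS hξ x) (summable_arS hξ y)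

theorem arS_eq_sum_range_add_arS_shift (hξ : Summable ξ) (x : Past Bool) (k : ℕ) :
    arS ξ x = ∑ i ∈ Finset.range k, ξ i * pmVal (x i)
      + arS (fun i => ξ (i + k)) (fun i => x (i + k)) :=
  ((summable_arS hξ x).sum_add_tsum_nat_add k).symm

theorem abs_arS_sub_le_of_eq_lt (hξ : Summable ξ) (hξ0 : ∀ i, 0 ≤ ξ i) {k : ℕ}
    {x y : Past Bool} (h : ∀ i < k, x i = y i) :
    |arS ξ x - arS ξ y| ≤ 2 * ∑' i, ξ (k + i) := by
  have hshift : Summable fun i => ξ (i + k) := (summable_nat_add_iff k).2 hξ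
  have hhead : ∑ i ∈ Finset.range k, ξ i * pmVal (x i)
      = ∑ i ∈ Finset.range k, ξ i * pmVal (y i) :=
    Finset.sum_congr rfl fun i hi => by rw [h i (Finset.mem_range.1 hi)]
  rw [arS_eq_sum_range_add_arS_shift hξ x k, arS_eq_sum_range_add_arS_shift hξ y k, hhead,
    add_sub_add_left_eq_sub]
  calc _ ≤ |arS (fun i => ξ (i + k)) (fun i => x (i + k))|
        + |arS (fun i => ξ (i + k)) (fun i => y (i + k))| := abs_sub _ _
    _ ≤ ∑' i, ξ (i + k) + ∑' i, ξ (i + k) :=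
        add_le_add (abs_arS_le hshift (fun i => hξ0 _) _) (abs_arS_le hshift (fun i => hξ0 _) _)
    _ = 2 * ∑' i, ξ (k + i) := by simp only [add_comm _ k]; ring

theorem abs_arS_sub_le_of_eq_ne (hξ : Summable ξ) (hξ0 : ∀ i, 0 ≤ ξ i) {n : ℕ}
    {x y : Past Bool} (h : ∀ i, i ≠ n → x i = y i) : |arS ξ x - arS ξ y| ≤ 2 * ξ n := by
  rw [arS, arS, ← (summable_arS hξ x).tsum_sub (summable_arS hξ y),
    tsum_eq_single n fun i hi => by rw [h i hi, sub_self], ← mul_sub, abs_mul,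
    abs_of_nonneg (hξ0 n), mul_comm 2]
  exact mul_le_mul_of_nonneg_left (abs_pmVal_sub_le _ _) (hξ0 n)

end Field

section AutoRegressive

variable {ψ : ℝ → ℝ} {ξ : ℕ → ℝ} {γ : ℝ}

theorem arP_eq (a : Bool) (x : Past Bool) : arP ψ ξ γ a x = ψ (pmVal a * (arS ξ x + γ)) := by
  rw [arP, arS, mul_add]

theorem arP_true (x : Past Bool) : arP ψ ξ γ true x = ψ (arS ξ x + γ) := by
  simp [arP_eq, pmVal]

theorem arP_false (x : Past Bool) : arP ψ ξ γ false x = ψ (-(arS ξ x + γ)) := by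
  simp [arP_eq, pmVal]

theorem sum_arP (hψsym : ∀ t, ψ t + ψ (-t) = 1) (x : Past Bool) :
    ∑ a, arP ψ ξ γ a x = 1 := by
  rw [Fintype.sum_bool, arP_true, arP_false, hψsym]

theorem arP_isProbKernel (hψ : Continuous ψ) (hψpos : ∀ t, 0 < ψ t)
    (hψsym : ∀ t, ψ t + ψ (-t) = 1) (hξ : Summable ξ) : IsProbKernel (arP ψ ξ γ) := by
  refine ⟨fun a => ?_, fun _ _ => (hψpos _).le, sum_arP hψsym⟩
  rw [show arP ψ ξ γ a = fun x => ψ (pmVal a * (arS ξ x + γ)) from funext (arP_eq a)]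
  exact hψ.measurable.comp (((measurable_arS hξ).add_const γ).const_mul (pmVal a))

theorem arP_attractive (hψ : Monotone ψ) (hψsym : ∀ t, ψ t + ψ (-t) = 1) (hξ : Summable ξ)
    (hξ0 : ∀ i, 0 ≤ ξ i) : Attractive (arP ψ ξ γ) :=
  attractive_of_monotone_true (sum_arP hψsym) fun x y hxy => by
    simp only [arP_true]
    exact hψ (add_le_add_left (arS_mono hξ hξ0 hxy) γ)

noncomputable def arBound (ξ : ℕ → ℝ) (γ : ℝ) : ℝ := ∑' i, ξ i + |γ|

theorem arP_arg_mem_Icc (hξ : Summable ξ) (hξ0 : ∀ i, 0 ≤ ξ i) (a : Bool) (x : Past Bool) :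
    pmVal a * (arS ξ x + γ) ∈ Set.Icc (-arBound ξ γ) (arBound ξ γ) := by
  rw [Set.mem_Icc, ← abs_le, abs_mul, abs_pmVal, one_mul]
  exact (abs_add_le _ _).trans (add_le_add_left (abs_arS_le hξ hξ0 x) _)

theorem arP_stronglyNonNull (hψ : Monotone ψ) (hψpos : ∀ t, 0 < ψ t) (hξ : Summable ξ)
    (hξ0 : ∀ i, 0 ≤ ξ i) : StronglyNonNull (arP ψ ξ γ) :=
  ⟨ψ (-arBound ξ γ), hψpos _, fun a x => by
    rw [arP_eq]; exact hψ (arP_arg_mem_Icc hξ hξ0 a x).1⟩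

section Lipschitz

variable {K : NNReal}

theorem abs_arP_sub_le (hψ : LipschitzOnWith K ψ (Set.Icc (-arBound ξ γ) (arBound ξ γ)))
    (hξ : Summable ξ) (hξ0 : ∀ i, 0 ≤ ξ i) (a : Bool) (x y : Past Bool) :
    |arP ψ ξ γ a x - arP ψ ξ γ a y| ≤ K * |arS ξ x - arS ξ y| := by
  rw [arP_eq, arP_eq]
  refine (hψ.dist_le_mul _ (arP_arg_mem_Icc hξ hξ0 a x) _
    (arP_arg_mem_Icc hξ hξ0 a y)).trans_eq ?_
  rw [Real.dist_eq, ← mul_sub, add_sub_add_right_eq_sub, abs_mul, abs_pmVal, one_mul]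

theorem varRate_arP_le (hψ : LipschitzOnWith K ψ (Set.Icc (-arBound ξ γ) (arBound ξ γ)))
    (hξ : Summable ξ) (hξ0 : ∀ i, 0 ≤ ξ i) (k : ℕ) :
    varRate (arP ψ ξ γ) k ≤ 2 * K * ∑' i, ξ (k + i) := by
  have htail : 0 ≤ ∑' i, ξ (k + i) := tsum_nonneg fun i => hξ0 (k + i)
  refine varRate_le (by positivity) fun b x y hxy => ?_
  calc |arP ψ ξ γ b x - arP ψ ξ γ b y| ≤ K * |arS ξ x - arS ξ y| :=
        abs_arP_sub_le hψ hξ hξ0 b x y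
    _ ≤ K * (2 * ∑' i, ξ (k + i)) := by gcongr; exact abs_arS_sub_le_of_eq_lt hξ hξ0 hxy
    _ = 2 * K * ∑' i, ξ (k + i) := by ring

theorem oscRate_arP_le (hψ : LipschitzOnWith K ψ (Set.Icc (-arBound ξ γ) (arBound ξ γ)))
    (hξ : Summable ξ) (hξ0 : ∀ i, 0 ≤ ξ i) (n : ℕ) :
    oscRate (arP ψ ξ γ) n ≤ 4 * K * ξ n := by
  have hξn := hξ0 n
  calc oscRate (arP ψ ξ γ) n ≤ Fintype.card Bool * (K * (2 * ξ n)) :=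
        oscRate_le (by positivity) fun a x y hxy =>
          (abs_arP_sub_le hψ hξ hξ0 a x y).trans <| by
            gcongr; exact abs_arS_sub_le_of_eq_ne hξ hξ0 hxy
    _ = 4 * K * ξ n := by rw [Fintype.card_bool]; ring

end Lipschitz

theorem arP_continuousKernel (hψ : ContDiff ℝ 1 ψ) (hξ : Summable ξ)
    (hξ0 : ∀ i, 0 ≤ ξ i) : ContinuousKernel (arP ψ ξ γ) := by
  obtain ⟨K, hK⟩ := hψ.contDiffOn.exists_lipschitzOnWith one_ne_zero (convex_Icc _ _)
    (isCompact_Icc (a := -arBound ξ γ) (b := arBound ξ γ))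
  have htail : Tendsto (fun k => 2 * K * ∑' i, ξ (k + i)) atTop (nhds 0) := by
    simpa only [add_comm _ (_ : ℕ), mul_zero] using
      (tendsto_sum_nat_add ξ).const_mul (2 * K : ℝ)
  exact squeeze_zero (varRate_nonneg _) (varRate_arP_le hK hξ hξ0) htail

end AutoRegressive

theorem statement17_general (ψ : ℝ → ℝ) (ξ : ℕ → ℝ) (γ : ℝ)
    (hψdiff : ContDiff ℝ 1 ψ) (hψmono : StrictMono ψ)
    (hψrange : ∀ t, ψ t ∈ Set.Ioo (0 : ℝ) 1) (hψsym : ∀ t, ψ t + ψ (-t) = 1)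
    (hξsum : Summable ξ) (hξ0 : ∀ i, 0 ≤ ξ i) :
    IsProbKernel (arP ψ ξ γ) ∧ Attractive (arP ψ ξ γ) ∧ RegularKernel (arP ψ ξ γ) ∧
      ((∃ K : NNReal, LipschitzWith K ψ) →
        ∃ C : ℝ, 0 < C ∧
          (∀ k : ℕ, varRate (arP ψ ξ γ) k ≤ C * ∑' i : ℕ, ξ (k + i)) ∧
          ∀ i : ℕ, oscRate (arP ψ ξ γ) i ≤ C * ξ i) := by
  have hψpos : ∀ t, 0 < ψ t := fun t => (hψrange t).1
  refine ⟨arP_isProbKernel hψdiff.continuous hψpos hψsym hξsum,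
    arP_attractive hψmono.monotone hψsym hξsum hξ0,
    ⟨arP_continuousKernel hψdiff hξsum hξ0,
      arP_stronglyNonNull hψmono.monotone hψpos hξsum hξ0⟩,
    ?_⟩
  rintro ⟨K, hK⟩
  have hKon := hK.lipschitzOnWith (s := Set.Icc (-arBound ξ γ) (arBound ξ γ))
  refine ⟨4 * K + 1, by positivity, fun k => ?_, fun n => ?_⟩
  · have htail : 0 ≤ ∑' i, ξ (k + i) := tsum_nonneg fun i => hξ0 (k + i)
    calc varRate (arP ψ ξ γ) k ≤ 2 * K * ∑' i, ξ (k + i) :=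
          varRate_arP_le hKon hξsum hξ0 k
      _ ≤ (4 * K + 1) * ∑' i, ξ (k + i) :=
          mul_le_mul_of_nonneg_right (by linarith [K.coe_nonneg]) htail
  · calc oscRate (arP ψ ξ γ) n ≤ 4 * K * ξ n := oscRate_arP_le hKon hξsum hξ0 n
      _ ≤ (4 * K + 1) * ξ n := mul_le_mul_of_nonneg_right (by linarith) (hξ0 n)

/-- Binary auto-regressive models are attractive regular probability kernels, and if
`ψ` is Lipschitz then `var_k ≤ C ∑_{n>k} ξ_n` and `osc_n ≤ C ξ_n`. -/
theorem statement17 (ψ : ℝ → ℝ) (ξ : ℕ → ℝ) (γ : ℝ)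
    (hψdiff : ContDiff ℝ 1 ψ) (hψmono : StrictMono ψ)
    (hψrange : ∀ t, ψ t ∈ Set.Ioo (0 : ℝ) 1) (hψsym : ∀ t, ψ t + ψ (-t) = 1)
    (hξsum : Summable ξ) (hξ0 : ∀ i, 0 ≤ ξ i) (hγ : 0 ≤ γ) :
    IsProbKernel (arP ψ ξ γ) ∧ Attractive (arP ψ ξ γ) ∧ RegularKernel (arP ψ ξ γ) ∧
      ((∃ K : NNReal, LipschitzWith K ψ) →
        ∃ C : ℝ, 0 < C ∧
          (∀ k : ℕ, varRate (arP ψ ξ γ) k ≤ C * ∑' i : ℕ, ξ (k + i)) ∧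
          ∀ i : ℕ, oscRate (arP ψ ξ γ) i ≤ C * ξ i) :=
  statement17_general ψ ξ γ hψdiff hψmono hψrange hψsym hξsum hξ0

end GT
end
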